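/- If X and Y are double suits, then X +_J Y and C_{n,J}(X) are double suits: in particular (X +_J Y)⁺ ∩ (X +_J Y)⁻ = {∅} and C_{n,J}(X)⁺ ∩ C_{n,J}(X)⁻ = {∅}. -/

import Mathlib

/-- Two valuations agree outside `J`: they take the same values on all coordinates not in `J`. -/
def AgreeOutside {ι A : Type*} (J : Set ι) (a b : ι → A) : Prop :=
  ∀ i, i ∉ J → a i = b i

/-- `𝒰` is a `J`-saturated disjoint cover of `V`. -/
def IsSatDisjCover {ι A : Type*} (J : Set ι) (V : Set (ι → A))
    (𝒰 : Set (Set (ι → A))) : Prop :=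
  ⋃₀ 𝒰 = V ∧ 𝒰.Pairwise Disjoint ∧
    ∀ a ∈ V, ∀ b ∈ V, AgreeOutside J a b → ∀ U ∈ 𝒰, a ∈ U → b ∈ U

/-- `V = V₁ ∪_J V₂`: a `J`-saturated disjoint (binary) cover of `V`. -/
def UnionJ {ι A : Type*} (J : Set ι) (V V₁ V₂ : Set (ι → A)) : Prop :=
  V₁ ∪ V₂ = V ∧ Disjoint V₁ V₂ ∧
    ∀ a ∈ V, ∀ b ∈ V, AgreeOutside J a b →
      ((a ∈ V₁ → b ∈ V₁) ∧ (a ∈ V₂ → b ∈ V₂))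

/-- `f : V → A` is independent of `J`. -/
def IndepOf {ι A : Type*} (J : Set ι) (V : Set (ι → A)) (f : (ι → A) → A) : Prop :=
  ∀ a ∈ V, ∀ b ∈ V, AgreeOutside J a b → f a = f b

/-- `V(n:f) = { ⃗a(n : f ⃗a) : ⃗a ∈ V }`. -/
def teamUpd {ι A : Type*} [DecidableEq ι] (n : ι) (f : (ι → A) → A)
    (V : Set (ι → A)) : Set (ι → A) :=
  (fun a => Function.update a n (f a)) '' V

/-- `V(n:A) = { ⃗a(n : c) : ⃗a ∈ V, c ∈ A }`. -/
def teamExp {ι A : Type*} [DecidableEq ι] (n : ι) (V : Set (ι → A)) : Set (ι → A) :=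
  {x | ∃ a ∈ V, ∃ c : A, x = Function.update a n c}

/-- An element of an IFG cylindric power set algebra: a pair `⟨X⁺, X⁻⟩` of sets of teams. -/
abbrev IFGElem (ι A : Type*) := Set (Set (ι → A)) × Set (Set (ι → A))

/-- Negation: `∼⟨X⁺, X⁻⟩ = ⟨X⁻, X⁺⟩`. -/
def ifgNeg {ι A : Type*} (X : IFGElem ι A) : IFGElem ι A := (X.2, X.1)

/-- `{V : V = V₁ ∪_J V₂ for some V₁ ∈ S, V₂ ∈ T}`. -/
def plusPos {ι A : Type*} (J : Set ι) (S T : Set (Set (ι → A))) : Set (Set (ι → A)) :=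
  {V | ∃ V₁ ∈ S, ∃ V₂ ∈ T, UnionJ J V V₁ V₂}

/-- The operation `X +_J Y`. -/
def ifgPlus {ι A : Type*} (J : Set ι) (X Y : IFGElem ι A) : IFGElem ι A :=
  (plusPos J X.1 Y.1, X.2 ∩ Y.2)

/-- The operation `X ·_J Y`. -/
def ifgTimes {ι A : Type*} (J : Set ι) (X Y : IFGElem ι A) : IFGElem ι A :=
  (X.1 ∩ Y.1, plusPos J X.2 Y.2)

/-- The cylindrification `C_{n,J}(X)`. -/
def ifgCyl {ι A : Type*} [DecidableEq ι] (n : ι) (J : Set ι) (X : IFGElem ι A) :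
    IFGElem ι A :=
  ({V | ∃ f, IndepOf J V f ∧ teamUpd n f V ∈ X.1}, {W | teamExp n W ∈ X.2})

/-- The constant `0`. -/
def ifgZero {ι A : Type*} : IFGElem ι A := ({∅}, Set.univ)

/-- The constant `1`. -/
def ifgOne {ι A : Type*} : IFGElem ι A := (Set.univ, {∅})

/-- The diagonal element `D_{ij}`. -/
def ifgD {ι A : Type*} (i j : ι) : IFGElem ι A :=
  ({V | ∀ a ∈ V, a i = a j}, {V | ∀ a ∈ V, a i ≠ a j})

/-- A suit: a nonempty collection of teams closed under subsets. -/
def IsSuit {ι A : Type*} (S : Set (Set (ι → A))) : Prop :=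
  S.Nonempty ∧ ∀ V ∈ S, ∀ V' ⊆ V, V' ∈ S

/-- A pair of suits. -/
def IsPairOfSuits {ι A : Type*} (X : IFGElem ι A) : Prop :=
  IsSuit X.1 ∧ IsSuit X.2

/-- A double suit: a pair of suits with `X⁺ ∩ X⁻ = {∅}`. -/
def IsDoubleSuit {ι A : Type*} (X : IFGElem ι A) : Prop :=
  IsPairOfSuits X ∧ X.1 ∩ X.2 = {∅}

/-!
Everything is downward closure plus the fact that the empty team lies in every suit.
A team in `(X +_J Y)⁺ ∩ X⁻ ∩ Y⁻` splits as `V₁ ∪ V₂` with `V₁ ∈ X⁺` and `V₂ ∈ Y⁺`, and the pieces,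
being subteams, also lie in `X⁻` and `Y⁻`, hence are empty. For cylindrification,
`V(n:f) ⊆ V(n:A)`, so a team in `C_{n,J}(X)⁺ ∩ C_{n,J}(X)⁻` has `V(n:f) ∈ X⁺ ∩ X⁻`, i.e. `V(n:f) = ∅`,
which forces `V = ∅`.
-/

section DoubleSuits

variable {ι A : Type*}

namespace IsSuit

variable {S T : Set (Set (ι → A))}

lemma empty_mem (hS : IsSuit S) : ∅ ∈ S :=
  let ⟨⟨V, hV⟩, hdown⟩ := hS
  hdown V hV ∅ (Set.empty_subset V)

lemma inter (hS : IsSuit S) (hT : IsSuit T) : IsSuit (S ∩ T) :=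
  ⟨⟨∅, hS.empty_mem, hT.empty_mem⟩,
    fun V hV V' hV' => ⟨hS.2 V hV.1 V' hV', hT.2 V hV.2 V' hV'⟩⟩

end IsSuit

namespace UnionJ

variable {J : Set ι} {V V₁ V₂ V' : Set (ι → A)}

lemma empty (J : Set ι) : UnionJ J (∅ : Set (ι → A)) ∅ ∅ :=
  ⟨Set.union_empty ∅, disjoint_bot_left, fun _ ha => absurd ha (Set.notMem_empty _)⟩

lemma inter_of_subset (h : UnionJ J V V₁ V₂) (hV' : V' ⊆ V) :
    UnionJ J V' (V₁ ∩ V') (V₂ ∩ V') := by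
  obtain ⟨hunion, hdisj, hsat⟩ := h
  refine ⟨?_, hdisj.mono Set.inter_subset_left Set.inter_subset_left, ?_⟩
  · rw [← Set.union_inter_distrib_right, hunion, Set.inter_eq_right.mpr hV']
  · intro a ha b hb hab
    obtain ⟨h₁, h₂⟩ := hsat a (hV' ha) b (hV' hb) hab
    exact ⟨fun h => ⟨h₁ h.1, hb⟩, fun h => ⟨h₂ h.1, hb⟩⟩

end UnionJ

section Teams

variable [DecidableEq ι] (n : ι)

@[simp]
lemma teamUpd_empty (f : (ι → A) → A) : teamUpd n f ∅ = ∅ :=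
  Set.image_empty _

@[simp]
lemma teamExp_empty : teamExp n (∅ : Set (ι → A)) = ∅ := by
  ext x
  simp [teamExp]

lemma teamUpd_subset_teamExp (f : (ι → A) → A) (V : Set (ι → A)) :
    teamUpd n f V ⊆ teamExp n V := by
  rintro x ⟨a, ha, rfl⟩
  exact ⟨a, ha, f a, rfl⟩

lemma teamExp_mono {V W : Set (ι → A)} (h : V ⊆ W) : teamExp n V ⊆ teamExp n W := by
  rintro x ⟨a, ha, c, rfl⟩
  exact ⟨a, h ha, c, rfl⟩

end Teams

lemma IndepOf.mono {J : Set ι} {V W : Set (ι → A)} {f : (ι → A) → A} (hf : IndepOf J W f)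
    (h : V ⊆ W) : IndepOf J V f :=
  fun a ha b hb hab => hf a (h ha) b (h hb) hab

section Plus

variable (J : Set ι) {X Y : IFGElem ι A}

lemma isSuit_ifgPlus_fst (hX : IsSuit X.1) (hY : IsSuit Y.1) : IsSuit (ifgPlus J X Y).1 := by
  refine ⟨⟨∅, ∅, hX.empty_mem, ∅, hY.empty_mem, UnionJ.empty J⟩, ?_⟩
  rintro V ⟨V₁, hV₁, V₂, hV₂, hunion⟩ V' hV'
  exact ⟨V₁ ∩ V', hX.2 V₁ hV₁ _ Set.inter_subset_left,
    V₂ ∩ V', hY.2 V₂ hV₂ _ Set.inter_subset_left, hunion.inter_of_subset hV'⟩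

lemma ifgPlus_fst_inter_snd (hX : X.1 ∩ X.2 = {∅}) (hY : Y.1 ∩ Y.2 = {∅})
    (hX₂ : IsSuit X.2) (hY₂ : IsSuit Y.2) :
    (ifgPlus J X Y).1 ∩ (ifgPlus J X Y).2 = {∅} := by
  have hX₁ : ∅ ∈ X.1 := (hX.ge (Set.mem_singleton ∅)).1
  have hY₁ : ∅ ∈ Y.1 := (hY.ge (Set.mem_singleton ∅)).1
  refine Set.eq_singleton_iff_unique_mem.mpr
    ⟨⟨⟨∅, hX₁, ∅, hY₁, UnionJ.empty J⟩, hX₂.empty_mem, hY₂.empty_mem⟩, ?_⟩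
  rintro V ⟨⟨V₁, hV₁, V₂, hV₂, hunion, -⟩, hVX, hVY⟩
  have hV₁ : V₁ ∈ X.1 ∩ X.2 := ⟨hV₁, hX₂.2 V hVX V₁ (hunion ▸ Set.subset_union_left)⟩
  have hV₂ : V₂ ∈ Y.1 ∩ Y.2 := ⟨hV₂, hY₂.2 V hVY V₂ (hunion ▸ Set.subset_union_right)⟩
  rw [hX, Set.mem_singleton_iff] at hV₁
  rw [hY, Set.mem_singleton_iff] at hV₂
  rw [← hunion, hV₁, hV₂, Set.empty_union]

end Plus

section Cyl

variable [DecidableEq ι] (n : ι) (J : Set ι) {X : IFGElem ι A}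

lemma isSuit_ifgCyl_fst (hX : IsSuit X.1) : IsSuit (ifgCyl n J X).1 := by
  refine ⟨⟨∅, fun b => b n, fun a ha => absurd ha (Set.notMem_empty a), ?_⟩, ?_⟩
  · simpa using hX.empty_mem
  · rintro V ⟨f, hf, hfV⟩ V' hV'
    exact ⟨f, hf.mono hV', hX.2 _ hfV _ (Set.image_mono hV')⟩

lemma isSuit_ifgCyl_snd (hX : IsSuit X.2) : IsSuit (ifgCyl n J X).2 :=
  ⟨⟨∅, by simpa [ifgCyl] using hX.empty_mem⟩,
    fun _ hV _ hV' => hX.2 _ hV _ (teamExp_mono n hV')⟩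

lemma ifgCyl_fst_inter_snd (hX : X.1 ∩ X.2 = {∅}) (hX₂ : IsSuit X.2) :
    (ifgCyl n J X).1 ∩ (ifgCyl n J X).2 = {∅} := by
  have hX₁ : ∅ ∈ X.1 := (hX.ge (Set.mem_singleton ∅)).1
  refine Set.eq_singleton_iff_unique_mem.mpr
    ⟨⟨⟨fun b => b n, fun a ha => absurd ha (Set.notMem_empty a), by simpa using hX₁⟩,
      by simpa [ifgCyl] using hX₂.empty_mem⟩, ?_⟩
  rintro V ⟨⟨f, -, hfV⟩, hVexp⟩
  have hupd : teamUpd n f V ∈ X.1 ∩ X.2 :=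
    ⟨hfV, hX₂.2 _ hVexp _ (teamUpd_subset_teamExp n f V)⟩
  rw [hX, Set.mem_singleton_iff, teamUpd, Set.image_eq_empty] at hupd
  exact hupd

end Cyl

namespace IsDoubleSuit

variable {X Y : IFGElem ι A}

lemma ifgPlus (J : Set ι) (hX : IsDoubleSuit X) (hY : IsDoubleSuit Y) :
    IsDoubleSuit (ifgPlus J X Y) :=
  ⟨⟨isSuit_ifgPlus_fst J hX.1.1 hY.1.1, hX.1.2.inter hY.1.2⟩,
    ifgPlus_fst_inter_snd J hX.2 hY.2 hX.1.2 hY.1.2⟩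

lemma ifgCyl [DecidableEq ι] (n : ι) (J : Set ι) (hX : IsDoubleSuit X) :
    IsDoubleSuit (ifgCyl n J X) :=
  ⟨⟨isSuit_ifgCyl_fst n J hX.1.1, isSuit_ifgCyl_snd n J hX.1.2⟩,
    ifgCyl_fst_inter_snd n J hX.2 hX.1.2⟩

end IsDoubleSuit

end DoubleSuits

/-- Sums and cylindrifications of double suits are double suits; in particular
`(X +_J Y)⁺ ∩ (X +_J Y)⁻ = {∅}` and `C_{n,J}(X)⁺ ∩ C_{n,J}(X)⁻ = {∅}`. -/
theorem doubleSuit_plus_cyl {ι A : Type*} [DecidableEq ι] (J : Set ι) (n : ι)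
    (X Y : IFGElem ι A) (hX : IsDoubleSuit X) (hY : IsDoubleSuit Y) :
    IsDoubleSuit (ifgPlus J X Y) ∧ IsDoubleSuit (ifgCyl n J X) ∧
    (ifgPlus J X Y).1 ∩ (ifgPlus J X Y).2 = {∅} ∧
    (ifgCyl n J X).1 ∩ (ifgCyl n J X).2 = {∅} := by
  have hplus := hX.ifgPlus J hY
  have hcyl := hX.ifgCyl n J
  exact ⟨hplus, hcyl, hplus.2, hcyl.2⟩
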